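/- Let I be a set and T_I the category of finitary I-trees and embeddings. Then: (a) T_I is well-founded, i.e., for every sequence of embeddings (f_n : X_{n+1} → X_n) of finitary I-trees indexed by ℕ, there exists N such that f_n is an isomorphism for all n ≥ N; (b) for all finitary I-trees X and Y, the set of embeddings X → Y is finite; in particular the automorphism group of every finitary I-tree is finite, hence Noetherian. -/

import Mathlib

open CategoryTheory Limits Opposite

/-- A full binary tree: a type with a root and a child relation such that every node
has exactly zero or two children and every node is reached from the root by a unique
path. -/
structure BinTree : Type 1 where
  carrier : Type
  root : carrier
  child : carrier → carrier → Prop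
  children_empty_or_pair : ∀ x : carrier,
    {y | child x y} = (∅ : Set carrier) ∨
    ∃ a b : carrier, a ≠ b ∧ {y | child x y} = {a, b}
  unique_path : ∀ y : carrier, ∃! l : List carrier,
    l.Chain' child ∧ l.head? = some root ∧ l.getLast? = some y

namespace BinTree

/-- `f` is a branch of `T`: an infinite sequence starting at the root and following the
child relation. -/
def IsBranch (T : BinTree) (f : ℕ → T.carrier) : Prop :=
  f 0 = T.root ∧ ∀ n, T.child (f n) (f (n + 1))

/-- The type of branches of `T`. -/
def Branch (T : BinTree) : Type := {f : ℕ → T.carrier // T.IsBranch f}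

/-- A node lies on a branch. -/
def OnBranch (T : BinTree) (x : T.carrier) : Prop :=
  ∃ (b : T.Branch) (n : ℕ), b.1 n = x

end BinTree

/-- An `I`-tree: a full binary tree together with a partial labeling of its branches
by elements of `I`. -/
structure ITree (I : Type) extends BinTree where
  label : toBinTree.Branch → Option I

namespace ITree

variable {I : Type}

/-- An embedding of `I`-trees: an injective map preserving the root, reflecting and
preserving the child relation, and preserving the labels of branches. -/
structure Emb (X Y : ITree I) where
  toFun : X.carrier → Y.carrier
  inj : Function.Injective toFun
  map_root : toFun X.root = Y.root
  map_child : ∀ a b : X.carrier, X.child a b ↔ Y.child (toFun a) (toFun b)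
  map_label : ∀ (b : X.toBinTree.Branch) (c : Y.toBinTree.Branch),
    (∀ n, c.1 n = toFun (b.1 n)) → ∀ i : I, X.label b = some i → Y.label c = some i

theorem Emb.ext' {X Y : ITree I} {f g : Emb X Y} (h : f.toFun = g.toFun) : f = g := by
  cases f; cases g; cases h; rfl

/-- The image of a branch under an embedding. -/
def Emb.mapBranch {X Y : ITree I} (f : Emb X Y) (b : X.toBinTree.Branch) :
    Y.toBinTree.Branch :=
  ⟨fun n => f.toFun (b.1 n), by
    constructor
    · show f.toFun (b.1 0) = Y.root
      rw [b.2.1, f.map_root]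
    · intro n
      exact (f.map_child _ _).1 (b.2.2 n)⟩

/-- The identity embedding. -/
def idEmb (X : ITree I) : Emb X X where
  toFun := id
  inj := fun a b h => h
  map_root := rfl
  map_child := fun _ _ => Iff.rfl
  map_label := by
    intro b c hbc i hi
    have : c = b := Subtype.ext (funext fun n => hbc n)
    rw [this]
    exact hi

/-- Composition of embeddings. -/
def compEmb {X Y Z : ITree I} (f : Emb X Y) (g : Emb Y Z) : Emb X Z where
  toFun := g.toFun ∘ f.toFun
  inj := g.inj.comp f.inj
  map_root := by
    show g.toFun (f.toFun X.root) = Z.root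
    rw [f.map_root, g.map_root]
  map_child := fun a b => (f.map_child a b).trans (g.map_child _ _)
  map_label := by
    intro b c hbc i hi
    exact g.map_label (f.mapBranch b) c (fun n => hbc n) i
      (f.map_label b (f.mapBranch b) (fun _ => rfl) i hi)

/-- An `I`-tree is finitary if it has finitely many branches, finitely many nodes whose
parent lies on no branch, and a total labeling function. -/
def Finitary (X : ITree I) : Prop :=
  Finite X.toBinTree.Branch ∧
  Finite {x : X.carrier | ¬ ∃ p, X.child p x ∧ X.toBinTree.OnBranch p} ∧
  ∀ b, (X.label b).isSome

end ITree

/-- The category of `I`-trees and embeddings. -/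
instance ITreeCat (I : Type) : Category (ITree I) where
  Hom := ITree.Emb
  id := ITree.idEmb
  comp := ITree.compEmb
  id_comp f := ITree.Emb.ext' rfl
  comp_id f := ITree.Emb.ext' rfl
  assoc f g h := ITree.Emb.ext' rfl

/-- The category `T_I` of finitary `I`-trees and embeddings. -/
abbrev FinITree (I : Type) : Type 1 := ObjectProperty.FullSubcategory (ITree.Finitary (I := I))

namespace BinTree

variable (T : BinTree)

noncomputable def pathTo (y : T.carrier) : List T.carrier := (T.unique_path y).choose

lemma pathTo_spec (y : T.carrier) :
    (T.pathTo y).Chain' T.child ∧ (T.pathTo y).head? = some T.root ∧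
      (T.pathTo y).getLast? = some y :=
  (T.unique_path y).choose_spec.1

lemma pathTo_unique {y : T.carrier} {l : List T.carrier}
    (h : l.Chain' T.child ∧ l.head? = some T.root ∧ l.getLast? = some y) :
    l = T.pathTo y :=
  (T.unique_path y).choose_spec.2 l h

lemma pathTo_ne_nil (y : T.carrier) : T.pathTo y ≠ [] := by
  intro h
  have := (T.pathTo_spec y).2.2
  rw [h] at this
  simp at this

lemma pathTo_root : T.pathTo T.root = [T.root] := by
  symm
  apply T.pathTo_unique
  refine ⟨List.isChain_singleton _, rfl, rfl⟩

lemma pathTo_child {p y : T.carrier} (h : T.child p y) :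
    T.pathTo y = T.pathTo p ++ [y] := by
  symm
  apply T.pathTo_unique
  have hs := T.pathTo_spec p
  refine ⟨?_, ?_, List.getLast?_concat⟩
  · rw [show List.Chain' = List.IsChain from rfl, List.isChain_append]
    refine ⟨hs.1, List.isChain_singleton _, ?_⟩
    intro x hx z hz
    simp only [List.head?_cons, Option.mem_def, Option.some.injEq] at hz
    rw [hs.2.2] at hx
    simp only [Option.mem_def, Option.some.injEq] at hx
    subst hx; subst hz; exact h
  · rw [List.head?_append_of_ne_nil _ (T.pathTo_ne_nil p), hs.2.1]

noncomputable def depth (y : T.carrier) : ℕ := (T.pathTo y).length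

lemma depth_pos (y : T.carrier) : 0 < T.depth y :=
  List.length_pos_iff.2 (T.pathTo_ne_nil y)

lemma depth_child {p y : T.carrier} (h : T.child p y) : T.depth y = T.depth p + 1 := by
  unfold depth
  rw [T.pathTo_child h, List.length_append, List.length_singleton]

lemma parent_unique {p q y : T.carrier} (hp : T.child p y) (hq : T.child q y) : p = q := by
  have h1 := T.pathTo_child hp
  have h2 := T.pathTo_child hq
  have h3 : T.pathTo p = T.pathTo q := by
    have := h1.symm.trans h2
    exact List.append_inj_left' this rfl
  have e1 := (T.pathTo_spec p).2.2
  have e2 := (T.pathTo_spec q).2.2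
  rw [h3, e2] at e1
  exact (Option.some.injEq _ _ ▸ e1.symm) ▸ rfl

lemma not_child_root {p : T.carrier} : ¬ T.child p T.root := by
  intro h
  have := T.pathTo_child h
  rw [T.pathTo_root] at this
  have : (1 : ℕ) = (T.pathTo p).length + 1 := by
    simpa using congrArg List.length this
  have h2 : 0 < (T.pathTo p).length := List.length_pos_iff.2 (T.pathTo_ne_nil p)
  omega

lemma exists_parent {y : T.carrier} (h : y ≠ T.root) : ∃ p, T.child p y := by
  have hs := T.pathTo_spec y
  have hne := T.pathTo_ne_nil y
  rcases List.eq_nil_or_concat (T.pathTo y) with h0 | ⟨l', z, hl⟩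
  · exact absurd h0 hne
  · rw [List.concat_eq_append] at hl
    have hz : z = y := by
      have := hs.2.2
      rw [hl, List.getLast?_concat] at this
      exact Option.some.injEq _ _ ▸ this
    subst hz
    rcases eq_or_ne l' [] with rfl | hl'
    · exfalso
      apply h
      have := hs.2.1
      rw [hl] at this
      simp at this
      exact this
    · refine ⟨l'.getLast hl', ?_⟩
      have hc := hs.1
      rw [hl, show List.Chain' = List.IsChain from rfl, List.isChain_append] at hc
      exact hc.2.2 _ (by simp [List.getLast?_eq_getLast hl']) _ rfl

lemma children_pair {x y : T.carrier} (h : T.child x y) :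
    ∃ a b, a ≠ b ∧ {z | T.child x z} = {a, b} := by
  rcases T.children_empty_or_pair x with h0 | h1
  · exfalso
    have : y ∈ {z | T.child x z} := h
    rw [h0] at this
    exact this
  · exact h1

end BinTree
namespace BinTree

variable (T : BinTree)

lemma depth_root : T.depth T.root = 1 := by
  unfold depth; rw [T.pathTo_root]; rfl

lemma eq_root_of_depth_eq_one {y : T.carrier} (h : T.depth y = 1) : y = T.root := by
  unfold depth at h
  obtain ⟨a, ha⟩ := List.length_eq_one_iff.1 h
  have h1 := (T.pathTo_spec y).2.1
  have h2 := (T.pathTo_spec y).2.2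
  rw [ha] at h1 h2
  simp at h1 h2
  rw [← h2, ← h1]

lemma child_eq_of_ne {x y₁ y₂ c : T.carrier} (h1 : T.child x y₁) (h2 : T.child x y₂)
    (hc : T.child x c) (n1 : y₁ ≠ c) (n2 : y₂ ≠ c) : y₁ = y₂ := by
  obtain ⟨a, b, hab, hset⟩ := T.children_pair h1
  have m1 : y₁ ∈ ({a, b} : Set T.carrier) := hset ▸ h1
  have m2 : y₂ ∈ ({a, b} : Set T.carrier) := hset ▸ h2
  have mc : c ∈ ({a, b} : Set T.carrier) := hset ▸ hc
  simp only [Set.mem_insert_iff, Set.mem_singleton_iff] at m1 m2 mc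
  rcases mc with rfl | rfl
  · rcases m1 with rfl | rfl
    · exact absurd rfl n1
    · rcases m2 with rfl | rfl
      · exact absurd rfl n2
      · rfl
  · rcases m1 with rfl | rfl
    · rcases m2 with rfl | rfl
      · rfl
      · exact absurd rfl n2
    · exact absurd rfl n1

open Classical in
noncomputable def parent (y : T.carrier) : T.carrier :=
  if h : ∃ p, T.child p y then h.choose else T.root

lemma child_parent {y : T.carrier} (h : y ≠ T.root) : T.child (T.parent y) y := by
  obtain ⟨p, hp⟩ := T.exists_parent h
  rw [parent]
  rw [dif_pos (⟨p, hp⟩ : ∃ p, T.child p y)]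
  exact (⟨p, hp⟩ : ∃ p, T.child p y).choose_spec

lemma parent_eq {p y : T.carrier} (h : T.child p y) : T.parent y = p := by
  have hy : y ≠ T.root := fun hr => T.not_child_root (hr ▸ h)
  exact T.parent_unique (T.child_parent hy) h

open Classical in
noncomputable def someChild (x : T.carrier) : T.carrier :=
  if h : ∃ y, T.child x y then
    (T.children_pair h.choose_spec).choose
  else T.root

lemma someChild_spec {x y : T.carrier} (h : T.child x y) :
    ∃ b, T.someChild x ≠ b ∧ {z | T.child x z} = {T.someChild x, b} := by
  rw [someChild]
  rw [dif_pos (⟨y, h⟩ : ∃ y, T.child x y)]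
  exact (T.children_pair (⟨y, h⟩ : ∃ y, T.child x y).choose_spec).choose_spec

lemma finite_depth_fiber : ∀ n : ℕ, {y : T.carrier | T.depth y = n}.Finite := by
  intro n
  induction n using Nat.strong_induction_on with
  | _ n ih =>
    match n with
    | 0 =>
      convert Set.finite_empty
      ext y
      simp only [Set.mem_setOf_eq, Set.mem_empty_iff_false, iff_false]
      exact fun h => (T.depth_pos y).ne' h
    | 1 =>
      apply Set.Finite.subset (Set.finite_singleton T.root)
      intro y hy
      exact T.eq_root_of_depth_eq_one hy
    | (m + 2) =>
      rw [← Set.finite_coe_iff]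
      haveI : Finite ↥{p : T.carrier | T.depth p = m + 1} :=
        Set.finite_coe_iff.2 (ih (m + 1) (by omega))
      refine Finite.of_injective
        (fun y : ↥{y : T.carrier | T.depth y = m + 2} =>
          ((⟨T.parent y.1, ?_⟩ : ↥{p : T.carrier | T.depth p = m + 1}),
            ((y.1 = T.someChild (T.parent y.1)) : Prop))) ?_
      · have hy : (y.1 : T.carrier) ≠ T.root := by
          intro hr
          have := y.2
          simp only [Set.mem_setOf_eq, hr, T.depth_root] at this
          omega
        have hc := T.child_parent hy
        have := T.depth_child hc
        have hd := y.2
        simp only [Set.mem_setOf_eq] at hd ⊢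
        omega
      · intro y₁ y₂ hF
        have hp : T.parent y₁.1 = T.parent y₂.1 := congrArg (fun z => z.1.1) hF
        have hProp : (y₁.1 = T.someChild (T.parent y₁.1)) ↔ (y₂.1 = T.someChild (T.parent y₂.1)) :=
          Iff.of_eq (congrArg Prod.snd hF)
        have hy₁ : (y₁.1 : T.carrier) ≠ T.root := by
          intro hr
          have := y₁.2
          simp only [Set.mem_setOf_eq, hr, T.depth_root] at this
          omega
        have hy₂ : (y₂.1 : T.carrier) ≠ T.root := by
          intro hr
          have := y₂.2
          simp only [Set.mem_setOf_eq, hr, T.depth_root] at this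
          omega
        have hc₁ := T.child_parent hy₁
        have hc₂ := T.child_parent hy₂
        rw [hp] at hc₁ hProp
        obtain ⟨b, hab, hset⟩ := T.someChild_spec hc₂
        have m1 : y₁.1 ∈ ({T.someChild (T.parent y₂.1), b} : Set T.carrier) := hset ▸ hc₁
        have m2 : y₂.1 ∈ ({T.someChild (T.parent y₂.1), b} : Set T.carrier) := hset ▸ hc₂
        simp only [Set.mem_insert_iff, Set.mem_singleton_iff] at m1 m2
        apply Subtype.ext
        rcases m1 with h1 | h1
        · rw [h1, ← hProp.1 h1]
        · rcases m2 with h2 | h2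
          · exact absurd ((hProp.2 h2).symm.trans h1) hab
          · rw [h1, h2]

end BinTree
namespace ITree

variable {I : Type} {X Y : ITree I}

lemma Emb.map_pathTo (f : Emb X Y) (x : X.carrier) :
    Y.pathTo (f.toFun x) = (X.pathTo x).map f.toFun := by
  symm
  apply Y.toBinTree.pathTo_unique
  refine ⟨?_, ?_, ?_⟩
  · rw [show List.Chain' = List.IsChain from rfl, List.isChain_map]
    exact ((X.toBinTree.pathTo_spec x).1).imp (fun a b h => (f.map_child a b).1 h)
  · rw [List.head?_map, (X.toBinTree.pathTo_spec x).2.1]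
    simp [f.map_root]
  · rw [List.getLast?_map, (X.toBinTree.pathTo_spec x).2.2]
    rfl

lemma Emb.map_depth (f : Emb X Y) (x : X.carrier) :
    Y.toBinTree.depth (f.toFun x) = X.toBinTree.depth x := by
  unfold BinTree.depth
  rw [f.map_pathTo, List.length_map]

lemma Emb.mapBranch_injective (f : Emb X Y) : Function.Injective f.mapBranch := by
  intro b b' h
  apply Subtype.ext
  funext n
  exact f.inj (congrFun (congrArg Subtype.val h) n)

lemma Emb.onBranch (f : Emb X Y) {x : X.carrier} (h : X.toBinTree.OnBranch x) :
    Y.toBinTree.OnBranch (f.toFun x) := by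
  obtain ⟨b, n, hb⟩ := h
  exact ⟨f.mapBranch b, n, by simp [Emb.mapBranch, hb]⟩

lemma Emb.onBranch_rev (f : Emb X Y) (hs : Function.Surjective f.mapBranch) {x : X.carrier}
    (h : Y.toBinTree.OnBranch (f.toFun x)) : X.toBinTree.OnBranch x := by
  obtain ⟨c, n, hc⟩ := h
  obtain ⟨b, rfl⟩ := hs c
  exact ⟨b, n, f.inj hc⟩

/-- Determination: an embedding is determined by its action on branches and on the
nodes with no on-branch parent. -/
lemma Emb.ext_of (f g : Emb X Y)
    (h1 : f.mapBranch = g.mapBranch)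
    (h2 : ∀ x, (¬∃ p, X.child p x ∧ X.toBinTree.OnBranch p) → f.toFun x = g.toFun x) :
    f = g := by
  apply Emb.ext'
  funext x
  by_cases hS : ∃ p, X.child p x ∧ X.toBinTree.OnBranch p
  · obtain ⟨p, hp, b, m, rfl⟩ := hS
    have hbb : f.mapBranch b = g.mapBranch b := by rw [h1]
    have hbr : ∀ n, f.toFun (b.1 n) = g.toFun (b.1 n) := fun n =>
      congrFun (congrArg Subtype.val hbb) n
    by_cases hxc : x = b.1 (m + 1)
    · subst hxc; exact hbr (m + 1)
    · have hcx : Y.child (f.toFun (b.1 m)) (f.toFun x) := (f.map_child _ _).1 hp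
      have hcg : Y.child (f.toFun (b.1 m)) (g.toFun x) := by
        rw [hbr m]; exact (g.map_child _ _).1 hp
      have hcc : Y.child (f.toFun (b.1 m)) (f.toFun (b.1 (m + 1))) :=
        (f.map_child _ _).1 (b.2.2 m)
      apply Y.toBinTree.child_eq_of_ne hcx hcg hcc
      · exact fun e => hxc (f.inj e)
      · intro e
        rw [hbr (m + 1)] at e
        exact hxc (g.inj e)
  · exact h2 x hS

end ITree
namespace ITree

variable {I : Type} {X Y : ITree I}

lemma finite_emb (X Y : ITree I) (hX : X.Finitary) (hY : Y.Finitary) : Finite (Emb X Y) := by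
  haveI : Finite X.toBinTree.Branch := hX.1
  haveI : Finite Y.toBinTree.Branch := hY.1
  haveI : Finite {x : X.carrier | ¬ ∃ p, X.child p x ∧ X.toBinTree.OnBranch p} := hX.2.1
  haveI : ∀ d : ℕ, Finite {y : Y.carrier // Y.toBinTree.depth y = d} := fun d =>
    Set.finite_coe_iff.2 (Y.toBinTree.finite_depth_fiber d)
  apply Finite.of_injective (fun f : Emb X Y =>
    (f.mapBranch,
      fun s : {x : X.carrier | ¬ ∃ p, X.child p x ∧ X.toBinTree.OnBranch p} =>
        (⟨f.toFun s.1, f.map_depth s.1⟩ :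
          {y : Y.carrier // Y.toBinTree.depth y = X.toBinTree.depth s.1})))
  intro f g h
  have h1 := congrArg Prod.fst h
  have h2 := congrArg Prod.snd h
  apply Emb.ext_of f g h1
  intro x hx
  exact congrArg Subtype.val (congrFun h2 ⟨x, hx⟩)

lemma child_someChild {T : BinTree} {x y : T.carrier} (h : T.child x y) :
    T.child x (T.someChild x) := by
  obtain ⟨b, hab, hset⟩ := T.someChild_spec h
  have : T.someChild x ∈ ({T.someChild x, b} : Set T.carrier) := by simp
  rw [← hset] at this
  exact this

/-- Off-branch internal nodes. -/
def OffInt (X : ITree I) : Type :=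
  {x : X.carrier // ¬ X.toBinTree.OnBranch x ∧ ∃ y, X.child x y}

lemma finite_offInt (X : ITree I) (hX : X.Finitary) : Finite (OffInt X) := by
  haveI : Finite {x : X.carrier | ¬ ∃ p, X.child p x ∧ X.toBinTree.OnBranch p} := hX.2.1
  refine Finite.of_injective (fun x : OffInt X =>
    (⟨X.toBinTree.someChild x.1, ?_⟩ :
      {x : X.carrier | ¬ ∃ p, X.child p x ∧ X.toBinTree.OnBranch p})) ?_
  · obtain ⟨y, hy⟩ := x.2.2
    have hc := child_someChild hy
    rintro ⟨p, hp, hob⟩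
    have : p = x.1 := X.toBinTree.parent_unique hp hc
    exact x.2.1 (this ▸ hob)
  · intro x₁ x₂ h
    have h' : X.toBinTree.someChild x₁.1 = X.toBinTree.someChild x₂.1 :=
      congrArg Subtype.val h
    obtain ⟨y₁, hy₁⟩ := x₁.2.2
    obtain ⟨y₂, hy₂⟩ := x₂.2.2
    have hc₁ := child_someChild hy₁
    have hc₂ := child_someChild hy₂
    rw [h'] at hc₁
    exact Subtype.ext (X.toBinTree.parent_unique hc₁ hc₂)

def Emb.mapOffInt (f : Emb X Y) (hs : Function.Surjective f.mapBranch) :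
    OffInt X → OffInt Y := fun x =>
  ⟨f.toFun x.1, fun h => x.2.1 (f.onBranch_rev hs h), by
    obtain ⟨y, hy⟩ := x.2.2
    exact ⟨f.toFun y, (f.map_child _ _).1 hy⟩⟩

lemma Emb.mapOffInt_injective (f : Emb X Y) (hs : Function.Surjective f.mapBranch) :
    Function.Injective (f.mapOffInt hs) := fun a b h =>
  Subtype.ext (f.inj (congrArg Subtype.val h))

lemma Emb.surjective_toFun (f : Emb X Y) (hs : Function.Surjective f.mapBranch)
    (ho : Function.Surjective (f.mapOffInt hs)) : Function.Surjective f.toFun := by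
  have key : ∀ n (y : Y.carrier), Y.toBinTree.depth y = n → ∃ x, f.toFun x = y := by
    intro n
    induction n using Nat.strong_induction_on with
    | _ n ih =>
      intro y hy
      by_cases hr : y = Y.root
      · exact ⟨X.root, hr ▸ f.map_root⟩
      · have hq := Y.toBinTree.child_parent hr
        have hdq : Y.toBinTree.depth y = Y.toBinTree.depth (Y.toBinTree.parent y) + 1 :=
          Y.toBinTree.depth_child hq
        obtain ⟨p, hp⟩ := ih (Y.toBinTree.depth (Y.toBinTree.parent y)) (by omega) _ rfl
        rw [← hp] at hq
        by_cases hpc : ∃ z, X.child p z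
        · obtain ⟨z, hz⟩ := hpc
          obtain ⟨a, b, hab, hset⟩ := X.toBinTree.children_pair hz
          have ha : X.child p a := by
            have : a ∈ ({a, b} : Set X.carrier) := by simp
            rw [← hset] at this; exact this
          have hb : X.child p b := by
            have : b ∈ ({a, b} : Set X.carrier) := by simp
            rw [← hset] at this; exact this
          by_cases h1 : y = f.toFun a
          · exact ⟨a, h1.symm⟩
          by_cases h2 : y = f.toFun b
          · exact ⟨b, h2.symm⟩
          exfalso
          have hfa : Y.child (f.toFun p) (f.toFun a) := (f.map_child _ _).1 ha
          have hfb : Y.child (f.toFun p) (f.toFun b) := (f.map_child _ _).1 hb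
          have := Y.toBinTree.child_eq_of_ne hfa hfb hq
            (fun e => h1 e.symm) (fun e => h2 e.symm)
          exact hab (f.inj this)
        · have hqOff : ¬ Y.toBinTree.OnBranch (f.toFun p) := by
            intro h
            obtain ⟨b, m, hm⟩ := f.onBranch_rev hs h
            exact hpc ⟨b.1 (m + 1), by rw [← hm]; exact b.2.2 m⟩
          obtain ⟨x, hx⟩ := ho ⟨f.toFun p, hqOff, ⟨y, hq⟩⟩
          have hxp : x.1 = p := f.inj (congrArg Subtype.val hx)
          exact absurd (hxp ▸ x.2.2) hpc
  exact fun y => key _ y rfl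

/-- The inverse of a bijective embedding, given that labels on `X` are total. -/
noncomputable def Emb.inverse (f : Emb X Y) (hb : Function.Bijective f.toFun)
    (hXtot : ∀ b, (X.label b).isSome) : Emb Y X where
  toFun := (Equiv.ofBijective f.toFun hb).symm
  inj := (Equiv.ofBijective f.toFun hb).symm.injective
  map_root := by
    rw [Equiv.symm_apply_eq]
    exact f.map_root.symm
  map_child := by
    intro a b
    have h := f.map_child ((Equiv.ofBijective f.toFun hb).symm a)
      ((Equiv.ofBijective f.toFun hb).symm b)
    have ea : f.toFun ((Equiv.ofBijective f.toFun hb).symm a) = a :=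
      (Equiv.ofBijective f.toFun hb).apply_symm_apply a
    have eb : f.toFun ((Equiv.ofBijective f.toFun hb).symm b) = b :=
      (Equiv.ofBijective f.toFun hb).apply_symm_apply b
    rw [ea, eb] at h
    exact h.symm
  map_label := by
    intro b c hbc i hi
    have hfc : f.mapBranch c = b := by
      apply Subtype.ext
      funext n
      show f.toFun (c.1 n) = b.1 n
      rw [hbc n]
      exact (Equiv.ofBijective f.toFun hb).apply_symm_apply (b.1 n)
    obtain ⟨j, hj⟩ := Option.isSome_iff_exists.1 (hXtot c)
    have := f.map_label c (f.mapBranch c) (fun _ => rfl) j hj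
    rw [hfc, hi] at this
    rw [hj]
    exact this.symm

end ITree
lemma nat_seq_stab (a : ℕ → ℕ) (h : ∀ n, a (n + 1) ≤ a n) :
    ∃ N, ∀ n, N ≤ n → a n = a N := by
  obtain ⟨N, hN⟩ : sInf (Set.range a) ∈ Set.range a := Nat.sInf_mem (Set.range_nonempty a)
  refine ⟨N, fun n hn => le_antisymm (antitone_nat_of_succ_le h hn) ?_⟩
  rw [hN]
  exact Nat.sInf_le ⟨n, rfl⟩

lemma nat_seq_stab_mono (a : ℕ → ℕ) (B : ℕ) (h : ∀ n, a n ≤ a (n + 1)) (hB : ∀ n, a n ≤ B) :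
    ∃ N, ∀ n, N ≤ n → a n = a N := by
  obtain ⟨N, hN⟩ := nat_seq_stab (fun n => B - a n)
    (fun n => by have h1 := h n; have h2 := hB (n + 1); omega)
  refine ⟨N, fun n hn => ?_⟩
  have := hN n hn
  have h1 := hB n
  have h2 := hB N
  omega

namespace ITree

variable {I : Type}

lemma isIso_of_bijective {X Y : FinITree I} (f : X ⟶ Y)
    (hb : Function.Bijective f.hom.toFun) : CategoryTheory.IsIso f := by
  refine ⟨ObjectProperty.homMk (f.hom.inverse hb X.2.2.2),
    ObjectProperty.hom_ext _ (ITree.Emb.ext' ?_), ObjectProperty.hom_ext _ (ITree.Emb.ext' ?_)⟩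
  · funext x
    exact (Equiv.ofBijective f.hom.toFun hb).symm_apply_apply x
  · funext y
    exact (Equiv.ofBijective f.hom.toFun hb).apply_symm_apply y

end ITree
/-- STATEMENT 18: (a) `T_I` is well-founded: every `ℕ`-indexed sequence of embeddings
`X_{n+1} → X_n` is eventually made of isomorphisms; (b) there are only finitely many
embeddings between any two finitary `I`-trees; in particular automorphism groups are
finite, hence Noetherian. -/
theorem stmt18 (I : Type) :
    (∀ (X : ℕ → FinITree I) (f : ∀ n, X (n + 1) ⟶ X n),
      ∃ N, ∀ n, N ≤ n → IsIso (f n)) ∧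
    (∀ X Y : FinITree I, Finite (X ⟶ Y)) ∧
    (∀ X : FinITree I, Finite (Aut X)) ∧
    (∀ (X : FinITree I) (c : ℕ → Subgroup (Aut X)), Monotone c →
      ∃ N, ∀ n, N ≤ n → c n = c N) := by
  have hb : ∀ X Y : FinITree I, Finite (X ⟶ Y) := fun X Y => by
    haveI := ITree.finite_emb X.obj Y.obj X.property Y.property
    exact Finite.of_injective (β := X.obj.Emb Y.obj) (fun g : X ⟶ Y => g.hom)
      (fun _ _ h => ObjectProperty.hom_ext _ h)
  have haut : ∀ X : FinITree I, Finite (Aut X) := fun X => by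
    haveI := hb X X
    exact Finite.of_injective (fun φ : Aut X => φ.hom) fun _ _ h => Iso.ext h
  refine ⟨?_, hb, haut, ?_⟩
  · intro X f
    haveI hFB : ∀ n, Finite (X n).obj.toBinTree.Branch := fun n => (X n).property.1
    haveI hFO : ∀ n, Finite (ITree.OffInt (X n).obj) := fun n =>
      ITree.finite_offInt (X n).obj (X n).property
    obtain ⟨N₁, hN₁⟩ := nat_seq_stab (fun n => Nat.card (X n).obj.toBinTree.Branch)
      (fun n => Nat.card_le_card_of_injective (f n).hom.mapBranch ((f n).hom.mapBranch_injective))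

    have hbij : ∀ n, N₁ ≤ n → Function.Bijective (f n).hom.mapBranch := by
      intro n hn
      refine (Nat.bijective_iff_injective_and_card _).2 ⟨(f n).hom.mapBranch_injective, ?_⟩
      rw [hN₁ (n + 1) (by omega), hN₁ n hn]
    obtain ⟨N₂, hN₂⟩ := nat_seq_stab (fun k => Nat.card (ITree.OffInt (X (N₁ + k)).obj))
      (fun k => Nat.card_le_card_of_injective
        ((f (N₁ + k)).hom.mapOffInt (hbij (N₁ + k) (by omega)).surjective)
        ((f (N₁ + k)).hom.mapOffInt_injective _))

    refine ⟨N₁ + N₂, fun n hn => ?_⟩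
    have hsurjB := (hbij n (by omega)).surjective
    have hcard : Nat.card (ITree.OffInt (X (n + 1)).obj) =
        Nat.card (ITree.OffInt (X n).obj) := by
      have h2 := hN₂ (n - N₁ + 1) (by omega)
      have h3 := hN₂ (n - N₁) (by omega)
      rw [show N₁ + (n - N₁ + 1) = n + 1 by omega] at h2
      rw [show N₁ + (n - N₁) = n by omega] at h3
      rw [h2, h3]
    have hOsurj : Function.Surjective ((f n).hom.mapOffInt hsurjB) :=
      ((Nat.bijective_iff_injective_and_card _).2
        ⟨(f n).hom.mapOffInt_injective _, hcard⟩).surjective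
    exact ITree.isIso_of_bijective (f n)
      ⟨(f n).hom.inj, (f n).hom.surjective_toFun hsurjB hOsurj⟩
  · intro X c hc
    haveI := haut X
    obtain ⟨N, hN⟩ := nat_seq_stab_mono (fun n => Nat.card (c n)) (Nat.card (Aut X))
      (fun n => Nat.card_le_card_of_injective (Set.inclusion (hc (Nat.le_succ n)))
        (Set.inclusion_injective _))
      (fun n => Nat.card_le_card_of_injective (fun x => x.1) Subtype.coe_injective)

    refine ⟨N, fun n hn => ?_⟩
    have hsub : (c N : Set (Aut X)) ⊆ (c n : Set (Aut X)) := hc hn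
    have hcard : (c n : Set (Aut X)).ncard ≤ (c N : Set (Aut X)).ncard := by
      rw [← Nat.card_coe_set_eq, ← Nat.card_coe_set_eq]
      exact (hN n hn).le
    exact (SetLike.ext' (Set.eq_of_subset_of_ncard_le hsub hcard (Set.toFinite _))).symm
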